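/- arXiv:2512.24881 — 10 statements merged into one kernel-verified Lean document; each statement's English description precedes it below -/
import Mathlib

section
/- If {·ᵢ}_{i∈I} is a family of bilinear products on a vector space V that are pairwise totally compatible, then any two finite linear combinations of these products are totally compatible. -/
/-- Two bilinear products on a vector space are totally compatible. -/
def TotComp {V : Type*} (m₁ m₂ : V → V → V) : Prop :=
  ∀ a b c : V, m₂ (m₁ a b) c = m₁ (m₂ a b) c ∧
    m₁ (m₂ a b) c = m₁ a (m₂ b c) ∧
    m₁ a (m₂ b c) = m₂ a (m₁ b c)

theorem stmt0 {K V ι : Type*} [Field K] [AddCommGroup V] [Module K V]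
    (m : ι → (V →ₗ[K] V →ₗ[K] V))
    (hpair : ∀ i j : ι, TotComp (fun a b => m i a b) (fun a b => m j a b))
    (s t : Finset ι) (α β : ι → K) :
    TotComp (fun a b => (∑ i ∈ s, α i • m i) a b)
      (fun a b => (∑ j ∈ t, β j • m j) a b) := by
  intro a b c
  simp only [LinearMap.sum_apply, LinearMap.smul_apply, map_sum, map_smul,
    Finset.smul_sum, smul_smul]
  refine ⟨?_, ?_, ?_⟩
  · rw [Finset.sum_comm]
    refine Finset.sum_congr rfl fun i _ => Finset.sum_congr rfl fun j _ => ?_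
    rw [mul_comm]; congr 1; exact (hpair j i a b c).1
  · refine Finset.sum_congr rfl fun i _ => Finset.sum_congr rfl fun j _ => ?_
    congr 1; exact (hpair j i a b c).2.1
  · rw [Finset.sum_comm]
    refine Finset.sum_congr rfl fun i _ => Finset.sum_congr rfl fun j _ => ?_
    rw [mul_comm]; congr 1; exact (hpair i j a b c).2.2
end

section
/- Let (A,·) be an associative algebra and *₁, *₂ bilinear products on A with *₁ associative. Assume ·, *₁, *₂ are pairwise totally compatible. Then *₁+*₂ is a totally compatible structure on (A,·) (i.e., associative and totally compatible with ·) if and only if *₂ is associative. -/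
def IsAssoc {V : Type*} (m : V → V → V) : Prop :=
  ∀ a b c : V, m (m a b) c = m a (m b c)

theorem stmt1 {K A : Type*} [Field K] [NonUnitalRing A] [Module K A]
    [SMulCommClass K A A] [IsScalarTower K A A]
    (m₁ m₂ : A →ₗ[K] A →ₗ[K] A)
    (h₁ : IsAssoc fun a b => m₁ a b)
    (hc1 : TotComp (fun a b : A => a * b) (fun a b => m₁ a b))
    (hc2 : TotComp (fun a b : A => a * b) (fun a b => m₂ a b))
    (hc12 : TotComp (fun a b => m₁ a b) (fun a b => m₂ a b)) :
    (IsAssoc (fun a b => (m₁ + m₂) a b) ∧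
      TotComp (fun a b : A => a * b) (fun a b => (m₁ + m₂) a b)) ↔
      IsAssoc (fun a b => m₂ a b) := by
  have htc : TotComp (fun a b : A => a * b) (fun a b => (m₁ + m₂) a b) := by
    intro a b c
    obtain ⟨p1, p2, p3⟩ := hc1 a b c
    obtain ⟨q1, q2, q3⟩ := hc2 a b c
    simp only [LinearMap.add_apply, map_add] at p1 p2 p3 q1 q2 q3 ⊢
    refine ⟨?_, ?_, ?_⟩
    · rw [p1, q1, add_mul]
    · rw [add_mul, mul_add, p2, q2]
    · rw [mul_add, p3, q3]
  constructor
  · rintro ⟨hassoc, -⟩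
    intro a b c
    have h := hassoc a b c
    obtain ⟨r1, r2, r3⟩ := hc12 a b c
    have h1 := h₁ a b c
    simp only [LinearMap.add_apply, map_add] at h h1 r1 r2 r3 ⊢
    rw [h1, r1, r2, r3] at h
    abel_nf at h
    exact add_left_cancel (add_left_cancel h)
  · intro h₂
    refine ⟨?_, htc⟩
    intro a b c
    obtain ⟨r1, r2, r3⟩ := hc12 a b c
    have h1 := h₁ a b c
    have h2 := h₂ a b c
    simp only [LinearMap.add_apply, map_add]
    simp only [] at h1 h2 r1 r2 r3
    rw [h1, h2, r1, r2, r3]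
end

section
/- Let X be a finite poset and K a field. For σ: X²_< → K constant on chains, the linear map φ_σ on J(I(X,K)) defined by φ_σ(e_{xy}) = σ(x,y)e_{xy} belongs to the centroid of J(I(X,K)). -/
open scoped Classical

/-- Pairs `x < y` in `X`, indexing the natural basis of `J(I(X,K))`. -/
abbrev IncPair (X : Type*) [PartialOrder X] := {p : X × X // p.1 < p.2}

/-- The Jacobson radical `J(I(X,K))` of the incidence algebra of a finite
poset `X` over `K`, identified with the functions on `{(x,y) : x < y}`. -/
abbrev JRad (X K : Type*) [PartialOrder X] [Field K] := IncPair X → K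

/-- The natural basis element `e_{xy}` of `J(I(X,K))`, for `x < y`. -/
noncomputable def e {X K : Type*} [PartialOrder X] [Field K]
    (x y : X) (_h : x < y) : JRad X K :=
  fun r => if r.1 = (x, y) then 1 else 0

/-- The incidence-algebra product on `J(I(X,K))`:
`e_{xy} · e_{uv} = δ_{yu} e_{xv}`. -/
noncomputable def jmul {X K : Type*} [PartialOrder X] [Fintype X] [Field K]
    (f g : JRad X K) : JRad X K :=
  fun r => ∑ z : X, if h : r.1.1 < z ∧ z < r.1.2 then
    f ⟨(r.1.1, z), h.1⟩ * g ⟨(z, r.1.2), h.2⟩ else 0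

/-- `σ : X²_< → K` is constant on chains. -/
def ConstOnChains {X K : Type*} [PartialOrder X] [Field K]
    (σ : IncPair X → K) : Prop :=
  ∀ p q : IncPair X,
    (∃ C : Set X, IsChain (· ≤ ·) C ∧
      p.1.1 ∈ C ∧ p.1.2 ∈ C ∧ q.1.1 ∈ C ∧ q.1.2 ∈ C) → σ p = σ q

lemma phi_eq {X K : Type*} [PartialOrder X] [Fintype X] [Field K]
    (σ : IncPair X → K)
    (φ : JRad X K →ₗ[K] JRad X K)
    (hφ : ∀ (x y : X) (h : x < y),
      φ (e x y h) = σ ⟨(x, y), h⟩ • e x y h) (f : JRad X K) :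
    φ f = fun r => σ r * f r := by
  have hrep : f = ∑ p : IncPair X, f p • e p.1.1 p.1.2 p.2 := by
    funext r
    simp only [Finset.sum_apply, Pi.smul_apply, e, smul_eq_mul, mul_ite, mul_one, mul_zero]
    rw [Finset.sum_eq_single r]
    · simp
    · intro b _ hb
      rw [if_neg]
      intro h
      exact hb (Subtype.ext h.symm)
    · simp
  conv_lhs => rw [hrep]
  rw [map_sum]
  funext r
  simp only [map_smul, hφ]
  simp only [Finset.sum_apply, Pi.smul_apply, e, smul_eq_mul, mul_ite, mul_one, mul_zero]
  rw [Finset.sum_eq_single r]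
  · simp [mul_comm]
  · intro b _ hb
    rw [if_neg]
    intro h
    exact hb (Subtype.ext h.symm)
  · simp

lemma chain3 {X : Type*} [PartialOrder X] {x z y : X} (h1 : x < z) (h2 : z < y) :
    IsChain (· ≤ ·) ({x, z, y} : Set X) := by
  intro a ha b hb _
  simp only [Set.mem_insert_iff, Set.mem_singleton_iff] at ha hb
  rcases ha with rfl | rfl | rfl <;> rcases hb with rfl | rfl | rfl <;>
    first
      | exact Or.inl le_rfl
      | exact Or.inl h1.le
      | exact Or.inr h1.le
      | exact Or.inl h2.le
      | exact Or.inr h2.le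
      | exact Or.inl (h1.le.trans h2.le)
      | exact Or.inr (h1.le.trans h2.le)

theorem stmt10 {X K : Type*} [PartialOrder X] [Fintype X] [Field K]
    (σ : IncPair X → K) (hσ : ConstOnChains σ)
    (φ : JRad X K →ₗ[K] JRad X K)
    (hφ : ∀ (x y : X) (h : x < y),
      φ (e x y h) = σ ⟨(x, y), h⟩ • e x y h) :
    ∀ f g : JRad X K,
      φ (jmul f g) = jmul (φ f) g ∧ φ (jmul f g) = jmul f (φ g) := by
  intro f g
  have hf := phi_eq σ φ hφ f
  have hg := phi_eq σ φ hφ g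
  have hfg := phi_eq σ φ hφ (jmul f g)
  constructor
  · rw [hfg, hf]
    funext r
    simp only [jmul, Finset.mul_sum]
    apply Finset.sum_congr rfl
    intro z _
    by_cases h : r.1.1 < z ∧ z < r.1.2
    · rw [dif_pos h, dif_pos h]
      have : σ r = σ ⟨(r.1.1, z), h.1⟩ := by
        apply hσ
        exact ⟨{r.1.1, z, r.1.2}, chain3 h.1 h.2, by simp, by simp [r.2.le], by simp, by simp⟩
      rw [this]; ring
    · rw [dif_neg h, dif_neg h, mul_zero]
  · rw [hfg, hg]
    funext r
    simp only [jmul, Finset.mul_sum]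
    apply Finset.sum_congr rfl
    intro z _
    by_cases h : r.1.1 < z ∧ z < r.1.2
    · rw [dif_pos h, dif_pos h]
      have : σ r = σ ⟨(z, r.1.2), h.2⟩ := by
        apply hσ
        exact ⟨{r.1.1, z, r.1.2}, chain3 h.1 h.2, by simp, by simp [r.2.le], by simp, by simp⟩
      rw [this]; ring
    · rw [dif_neg h, dif_neg h, mul_zero]
end

section
/- Let X be a finite poset, K a field, and φ ∈ Γ(J(I(X,K))). For x < y with l(x,y) > 1 (i.e., there is z with x < z < y), φ(e_{xy}) is a scalar multiple of e_{xy}. -/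
open scoped Classical

theorem stmt11 {X K : Type*} [PartialOrder X] [Fintype X] [Field K]
    (φ : JRad X K →ₗ[K] JRad X K)
    (hφ : ∀ f g : JRad X K,
      φ (jmul f g) = jmul (φ f) g ∧ φ (jmul f g) = jmul f (φ g))
    (x y : X) (hxy : x < y) (hl : ∃ z : X, x < z ∧ z < y) :
    ∃ c : K, φ (e x y hxy) = c • e x y hxy := by
  obtain ⟨z, hxz, hzy⟩ := hl
  have hmul : (e x y hxy : JRad X K) = jmul (e x z hxz) (e z y hzy) := by
    funext r
    obtain ⟨⟨a, b⟩, hab⟩ := r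
    simp only [jmul, e]
    rw [Finset.sum_eq_single z]
    · by_cases h : (a, b) = (x, y)
      · rw [Prod.mk.injEq] at h
        obtain ⟨rfl, rfl⟩ := h
        simp [hxz, hzy]
      · rw [if_neg h]
        rcases eq_or_ne a x with rfl | ha
        · have hb : b ≠ y := fun hb => h (by rw [hb])
          simp [Prod.ext_iff, hb]
        · simp [Prod.ext_iff, ha]
    · intro w _ hw
      simp [Prod.ext_iff, hw]
    · simp
  have h1 := (hφ (e x z hxz) (e z y hzy)).1
  have h2 := (hφ (e x z hxz) (e z y hzy)).2
  rw [← hmul] at h1 h2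
  refine ⟨φ (e x y hxy) ⟨(x, y), hxy⟩, ?_⟩
  funext r
  by_cases h : r.1 = (x, y)
  · have : r = ⟨(x, y), hxy⟩ := Subtype.ext h
    subst this
    simp [e]
  · have hr0 : φ (e x y hxy) r = 0 := by
      by_cases ha : r.1.1 = x
      · have hb : r.1.2 ≠ y := fun hb => h (Prod.ext ha hb)
        rw [h1]
        simp only [jmul]
        apply Finset.sum_eq_zero
        intro w _
        simp [e, Prod.ext_iff, hb]
      · rw [h2]
        simp only [jmul]
        apply Finset.sum_eq_zero
        intro w _
        simp [e, Prod.ext_iff, ha]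
    simp [hr0, e, h]
end

section
/- Let X be a finite poset, K a field, and φ ∈ Γ(J(I(X,K))). Then the map σ: X²_< → K defined by σ(x,y) = φ(e_{xy})(x,y) (the coefficient of e_{xy} in φ(e_{xy})) is constant on chains. -/
open scoped Classical

section Aux
variable {X K : Type*} [PartialOrder X] [Fintype X] [Field K]

lemma jmul_right_e (f : JRad X K) {x y z : X} (hxy : x < y) (hyz : y < z) :
    jmul f (e y z hyz) ⟨(x, z), hxy.trans hyz⟩ = f ⟨(x, y), hxy⟩ := by
  unfold jmul
  rw [Finset.sum_eq_single y]
  · rw [dif_pos ⟨hxy, hyz⟩]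
    simp [e]
  · intro w _ hw
    by_cases h : x < w ∧ w < z
    · rw [dif_pos h]
      have : ¬ ((w, z) = (y, z)) := by simp [hw]
      simp [e, this]
    · rw [dif_neg h]
  · intro h; exact absurd (Finset.mem_univ y) h

lemma jmul_left_e (g : JRad X K) {x y z : X} (hxy : x < y) (hyz : y < z) :
    jmul (e x y hxy) g ⟨(x, z), hxy.trans hyz⟩ = g ⟨(y, z), hyz⟩ := by
  unfold jmul
  rw [Finset.sum_eq_single y]
  · rw [dif_pos ⟨hxy, hyz⟩]
    simp [e]
  · intro w _ hw
    by_cases h : x < w ∧ w < z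
    · rw [dif_pos h]
      have : ¬ ((x, w) = (x, y)) := by simp [hw]
      simp [e, this]
    · rw [dif_neg h]
  · intro h; exact absurd (Finset.mem_univ y) h

lemma jmul_e_e {x y z : X} (hxy : x < y) (hyz : y < z) :
    jmul (K := K) (e x y hxy) (e y z hyz) = e x z (hxy.trans hyz) := by
  funext r
  obtain ⟨⟨a, b⟩, hab⟩ := r
  by_cases hr : (a, b) = (x, z)
  · obtain ⟨rfl, rfl⟩ : a = x ∧ b = z := Prod.ext_iff.mp hr
    rw [jmul_left_e _ hxy hyz]
    simp [e]
  · have h2 : e (K := K) x z (hxy.trans hyz) ⟨(a,b), hab⟩ = 0 := by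
      simp [e, hr]
    rw [h2]
    unfold jmul
    apply Finset.sum_eq_zero
    intro w _
    by_cases h : a < w ∧ w < b
    · rw [dif_pos h]
      by_cases h1 : (a, w) = (x, y)
      · by_cases h2 : (w, b) = (y, z)
        · exfalso
          apply hr
          rw [Prod.ext_iff] at h1 h2 ⊢
          exact ⟨h1.1, h2.2⟩
        · simp [e, h2]
      · simp [e, h1]
    · rw [dif_neg h]

variable (φ : JRad X K →ₗ[K] JRad X K)
  (hφ : ∀ f g : JRad X K,
      φ (jmul f g) = jmul (φ f) g ∧ φ (jmul f g) = jmul f (φ g))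

include hφ

lemma L_adj {x y z : X} (hxy : x < y) (hyz : y < z) :
    φ (e x y hxy) ⟨(x, y), hxy⟩ = φ (e y z hyz) ⟨(y, z), hyz⟩ := by
  have h := ((hφ (e x y hxy) (e y z hyz)).1.symm.trans (hφ (e x y hxy) (e y z hyz)).2)
  have h2 := congrFun h ⟨(x, z), hxy.trans hyz⟩
  rwa [jmul_right_e _ hxy hyz, jmul_left_e _ hxy hyz] at h2

lemma L_left {x y z : X} (hxy : x < y) (hyz : y < z) :
    φ (e x z (hxy.trans hyz)) ⟨(x, z), hxy.trans hyz⟩ = φ (e x y hxy) ⟨(x, y), hxy⟩ := by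
  have h := (hφ (e x y hxy) (e y z hyz)).1
  rw [jmul_e_e hxy hyz] at h
  have h2 := congrFun h ⟨(x, z), hxy.trans hyz⟩
  rwa [jmul_right_e _ hxy hyz] at h2

lemma L_right {x y z : X} (hxy : x < y) (hyz : y < z) :
    φ (e x z (hxy.trans hyz)) ⟨(x, z), hxy.trans hyz⟩ = φ (e y z hyz) ⟨(y, z), hyz⟩ := by
  have h := (hφ (e x y hxy) (e y z hyz)).2
  rw [jmul_e_e hxy hyz] at h
  have h2 := congrFun h ⟨(x, z), hxy.trans hyz⟩
  rwa [jmul_left_e _ hxy hyz] at h2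

lemma L_sub {a b x y : X} (hax : a ≤ x) (hxy : x < y) (hyb : y ≤ b) (hab : a < b) :
    φ (e x y hxy) ⟨(x, y), hxy⟩ = φ (e a b hab) ⟨(a, b), hab⟩ := by
  rcases hax.lt_or_eq with hax | rfl
  · have h1 : φ (e x y hxy) ⟨(x,y),hxy⟩ = φ (e a y (hax.trans hxy)) ⟨(a,y), hax.trans hxy⟩ :=
      (L_right φ hφ hax hxy).symm
    rcases hyb.lt_or_eq with hyb | rfl
    · rw [h1]
      exact (L_left φ hφ (hax.trans hxy) hyb).symm
    · rw [h1]
  · rcases hyb.lt_or_eq with hyb | rfl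
    · exact (L_left φ hφ hxy hyb).symm
    · rfl
end Aux


theorem stmt12 {X K : Type*} [PartialOrder X] [Fintype X] [Field K]
    (φ : JRad X K →ₗ[K] JRad X K)
    (hφ : ∀ f g : JRad X K,
      φ (jmul f g) = jmul (φ f) g ∧ φ (jmul f g) = jmul f (φ g)) :
    ∀ (x y u v : X) (hxy : x < y) (huv : u < v),
      (∃ C : Set X, IsChain (· ≤ ·) C ∧ x ∈ C ∧ y ∈ C ∧ u ∈ C ∧ v ∈ C) →
      φ (e x y hxy) ⟨(x, y), hxy⟩ = φ (e u v huv) ⟨(u, v), huv⟩ := by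
  intro x y u v hxy huv ⟨C, hC, hxC, hyC, huC, hvC⟩
  have hxu : x ≤ u ∨ u ≤ x := hC.total hxC huC
  have hyv : y ≤ v ∨ v ≤ y := hC.total hyC hvC
  obtain ⟨a, hax, hau⟩ : ∃ a, a ≤ x ∧ a ≤ u := by
    rcases hxu with h | h
    exacts [⟨x, le_refl x, h⟩, ⟨u, h, le_refl u⟩]
  obtain ⟨b, hyb, hvb⟩ : ∃ b, y ≤ b ∧ v ≤ b := by
    rcases hyv with h | h
    exacts [⟨v, h, le_refl v⟩, ⟨y, le_refl y, h⟩]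
  have hab : a < b := lt_of_le_of_lt hax (lt_of_lt_of_le hxy hyb)
  rw [L_sub φ hφ hax hxy hyb hab, L_sub φ hφ hau huv hvb hab]
end

section
/- Let X be a finite poset and K a field. The elements of Γ(J(I(X,K))) are exactly the maps φ_σ + η, where σ: X²_< → K is constant on chains (φ_σ(e_{xy}) = σ(x,y)e_{xy}) and η is an annihilator-valued linear map (η(J) ⊆ Ann(J), η(J·J) = 0). -/
open scoped Classical

/-- The map `φ_σ` on `J(I(X,K))` with `φ_σ(e_{xy}) = σ(x,y) e_{xy}`. -/
noncomputable def phiSigma {X K : Type*} [PartialOrder X] [Field K]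
    (σ : IncPair X → K) : JRad X K →ₗ[K] JRad X K where
  toFun f := fun r => σ r * f r
  map_add' f g := by funext r; simp [mul_add]
  map_smul' c f := by
    funext r
    simp [smul_eq_mul]
    ring

namespace Stmt13Aux

variable {X K : Type*} [PartialOrder X] [Fintype X] [Field K]

lemma sum_basis (f : JRad X K) :
    f = ∑ p : IncPair X, f p • (e p.1.1 p.1.2 p.2 : JRad X K) := by
  funext r
  rw [Finset.sum_apply]
  have h : ∀ p : IncPair X,
      f p • (e p.1.1 p.1.2 p.2 : JRad X K) r = if r = p then f p else 0 := by
    intro p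
    simp only [e, Pi.smul_apply, smul_eq_mul]
    by_cases h : r = p
    · subst h; simp
    · rw [if_neg, if_neg h, mul_zero]
      intro hc; exact h (Subtype.ext (by simpa using hc))
  simp only [Pi.smul_apply, h]
  rw [Finset.sum_ite_eq (Finset.univ) r f]
  simp

lemma jmul_e_right (f : JRad X K) (u v : X) (huv : u < v) (a b : X) (hab : a < b) :
    jmul f (e u v huv) ⟨(a, b), hab⟩ =
      if h : a < u ∧ b = v then f ⟨(a, u), h.1⟩ else 0 := by
  show (∑ z : X, if h : a < z ∧ z < b then
      f ⟨(a, z), h.1⟩ * (e u v huv : JRad X K) ⟨(z, b), h.2⟩ else 0) = _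
  rw [Finset.sum_eq_single u]
  · by_cases h : a < u ∧ b = v
    · obtain ⟨h1, h2⟩ := h
      subst h2
      rw [dif_pos ⟨h1, huv⟩, dif_pos ⟨h1, rfl⟩]
      simp [e]
    · rw [dif_neg h]
      by_cases h' : a < u ∧ u < b
      · rw [dif_pos h']
        have hbv : b ≠ v := fun hb => h ⟨h'.1, hb⟩
        simp [e, hbv]
      · rw [dif_neg h']
  · intro z _ hz
    by_cases h' : a < z ∧ z < b
    · rw [dif_pos h']
      have : (e u v huv : JRad X K) ⟨(z, b), h'.2⟩ = 0 := by
        simp only [e, Prod.mk.injEq]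
        rw [if_neg (fun hc => hz hc.1)]
      rw [this, mul_zero]
    · rw [dif_neg h']
  · intro h; exact absurd (Finset.mem_univ u) h

lemma jmul_e_left (g : JRad X K) (x y : X) (hxy : x < y) (a b : X) (hab : a < b) :
    jmul (e x y hxy) g ⟨(a, b), hab⟩ =
      if h : a = x ∧ y < b then g ⟨(y, b), h.2⟩ else 0 := by
  show (∑ z : X, if h : a < z ∧ z < b then
      (e x y hxy : JRad X K) ⟨(a, z), h.1⟩ * g ⟨(z, b), h.2⟩ else 0) = _
  rw [Finset.sum_eq_single y]
  · by_cases h : a = x ∧ y < b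
    · obtain ⟨h1, h2⟩ := h
      subst h1
      rw [dif_pos ⟨hxy, h2⟩, dif_pos ⟨rfl, h2⟩]
      simp [e]
    · rw [dif_neg h]
      by_cases h' : a < y ∧ y < b
      · rw [dif_pos h']
        have hax : a ≠ x := fun ha => h ⟨ha, h'.2⟩
        simp [e, hax]
      · rw [dif_neg h']
  · intro z _ hz
    by_cases h' : a < z ∧ z < b
    · rw [dif_pos h']
      have : (e x y hxy : JRad X K) ⟨(a, z), h'.1⟩ = 0 := by
        simp only [e, Prod.mk.injEq]
        rw [if_neg (fun hc => hz hc.2)]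
      rw [this, zero_mul]
    · rw [dif_neg h']
  · intro h; exact absurd (Finset.mem_univ y) h

lemma e_mul_e {x y v : X} (h1 : x < y) (h2 : y < v) :
    jmul (e x y h1) (e y v h2) = (e x v (h1.trans h2) : JRad X K) := by
  funext r
  obtain ⟨⟨a, b⟩, hab⟩ := r
  rw [jmul_e_left]
  by_cases h : a = x ∧ y < b
  · rw [dif_pos h]
    obtain ⟨ha, hb⟩ := h
    subst ha
    simp only [e, Prod.mk.injEq]
  · rw [dif_neg h]
    have : (a, b) ≠ (x, v) := by
      rintro ⟨⟩
      exact h ⟨rfl, h2⟩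
    simp [e, this]

lemma e_mul_e_ne {x y u v : X} (h1 : x < y) (h2 : u < v) (hne : y ≠ u) :
    jmul (e x y h1) (e u v h2) = (0 : JRad X K) := by
  funext r
  obtain ⟨⟨a, b⟩, hab⟩ := r
  rw [jmul_e_left]
  by_cases h : a = x ∧ y < b
  · rw [dif_pos h]
    simp only [e, Prod.mk.injEq, Pi.zero_apply]
    rw [if_neg (fun hc => hne hc.1)]
  · rw [dif_neg h]; rfl

lemma jmul_add_left (f₁ f₂ g : JRad X K) :
    jmul (f₁ + f₂) g = jmul f₁ g + jmul f₂ g := by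
  funext r
  simp only [jmul, Pi.add_apply]
  rw [← Finset.sum_add_distrib]
  refine Finset.sum_congr rfl fun z _ => ?_
  by_cases h : r.1.1 < z ∧ z < r.1.2
  · rw [dif_pos h, dif_pos h, dif_pos h, add_mul]
  · rw [dif_neg h, dif_neg h, dif_neg h, add_zero]

lemma jmul_add_right (f g₁ g₂ : JRad X K) :
    jmul f (g₁ + g₂) = jmul f g₁ + jmul f g₂ := by
  funext r
  simp only [jmul, Pi.add_apply]
  rw [← Finset.sum_add_distrib]
  refine Finset.sum_congr rfl fun z _ => ?_
  by_cases h : r.1.1 < z ∧ z < r.1.2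
  · rw [dif_pos h, dif_pos h, dif_pos h, mul_add]
  · rw [dif_neg h, dif_neg h, dif_neg h, add_zero]

lemma jmul_ann {h : JRad X K}
    (hs : ∀ r : IncPair X, (¬ IsMin r.1.1 ∨ ¬ IsMax r.1.2) → h r = 0)
    (g : JRad X K) : jmul h g = 0 ∧ jmul g h = 0 := by
  constructor
  · funext r
    show (∑ z : X, _) = (0 : K)
    refine Finset.sum_eq_zero fun z _ => ?_
    by_cases h' : r.1.1 < z ∧ z < r.1.2
    · rw [dif_pos h']
      have : h ⟨(r.1.1, z), h'.1⟩ = 0 :=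
        hs _ (Or.inr fun hm => hm.not_lt h'.2)
      rw [this, zero_mul]
    · rw [dif_neg h']
  · funext r
    show (∑ z : X, _) = (0 : K)
    refine Finset.sum_eq_zero fun z _ => ?_
    by_cases h' : r.1.1 < z ∧ z < r.1.2
    · rw [dif_pos h']
      have : h ⟨(z, r.1.2), h'.2⟩ = 0 :=
        hs _ (Or.inl fun hm => hm.not_lt h'.1)
      rw [this, mul_zero]
    · rw [dif_neg h']

omit [Fintype X] in
lemma isChain_triple {a z b : X} (h1 : a ≤ z) (h2 : z ≤ b) :
    IsChain (· ≤ ·) ({a, z, b} : Set X) := by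
  intro u hu v hv _
  simp only [Set.mem_insert_iff, Set.mem_singleton_iff] at hu hv
  rcases hu with rfl | rfl | rfl <;> rcases hv with rfl | rfl | rfl <;>
    first
      | exact Or.inl le_rfl
      | exact Or.inl h1
      | exact Or.inl h2
      | exact Or.inl (h1.trans h2)
      | exact Or.inr h1
      | exact Or.inr h2
      | exact Or.inr (h1.trans h2)

omit [Fintype X] in
lemma sigma_eq_of_between {σ : IncPair X → K} (hσ : ConstOnChains σ)
    {a z b : X} (hab : a < b) (haz : a < z) (hzb : z < b) :
    (σ ⟨(a, b), hab⟩ = σ ⟨(a, z), haz⟩) ∧ (σ ⟨(a, b), hab⟩ = σ ⟨(z, b), hzb⟩) := by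
  constructor
  · exact hσ _ _ ⟨{a, z, b}, isChain_triple haz.le hzb.le, by simp, by simp, by simp, by simp⟩
  · exact hσ _ _ ⟨{a, z, b}, isChain_triple haz.le hzb.le, by simp, by simp, by simp, by simp⟩

lemma phiSigma_jmul {σ : IncPair X → K} (hσ : ConstOnChains σ) (f g : JRad X K) :
    phiSigma σ (jmul f g) = jmul (phiSigma σ f) g ∧
    phiSigma σ (jmul f g) = jmul f (phiSigma σ g) := by
  constructor
  · funext r
    show σ r * (∑ z : X, _) = (∑ z : X, _)
    rw [Finset.mul_sum]
    refine Finset.sum_congr rfl fun z _ => ?_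
    by_cases h' : r.1.1 < z ∧ z < r.1.2
    · rw [dif_pos h', dif_pos h']
      show σ r * (f _ * g _) = (phiSigma σ f) ⟨(r.1.1, z), h'.1⟩ * g _
      show σ r * (f _ * g _) = σ ⟨(r.1.1, z), h'.1⟩ * f ⟨(r.1.1, z), h'.1⟩ * g _
      have := (sigma_eq_of_between hσ r.2 h'.1 h'.2).1
      have hr : σ r = σ ⟨(r.1.1, z), h'.1⟩ := by
        convert this using 2
      rw [hr]; ring
    · rw [dif_neg h', dif_neg h', mul_zero]
  · funext r
    show σ r * (∑ z : X, _) = (∑ z : X, _)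
    rw [Finset.mul_sum]
    refine Finset.sum_congr rfl fun z _ => ?_
    by_cases h' : r.1.1 < z ∧ z < r.1.2
    · rw [dif_pos h', dif_pos h']
      show σ r * (f _ * g _) = f _ * (σ ⟨(z, r.1.2), h'.2⟩ * g ⟨(z, r.1.2), h'.2⟩)
      have := (sigma_eq_of_between hσ r.2 h'.1 h'.2).2
      have hr : σ r = σ ⟨(z, r.1.2), h'.2⟩ := by
        convert this using 2
      rw [hr]; ring
    · rw [dif_neg h', dif_neg h', mul_zero]

section Phi

variable (φ : JRad X K →ₗ[K] JRad X K)
  (hφ : ∀ f g : JRad X K, φ (jmul f g) = jmul (φ f) g ∧ φ (jmul f g) = jmul f (φ g))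

/-- The diagonal coefficient of `φ`. -/
noncomputable def sig : IncPair X → K := fun p => φ (e p.1.1 p.1.2 p.2) p

include hφ

/-- The two-sided switch identity. -/
lemma switch (f g : JRad X K) : jmul (φ f) g = jmul f (φ g) :=
  (hφ f g).1.symm.trans (hφ f g).2

lemma S1 {x y : X} (hxy : x < y) {a u v : X} (hau : a < u) (huv : u < v)
    (hne : u ≠ y) : φ (e x y hxy) ⟨(a, u), hau⟩ = 0 := by
  have h0 := (hφ (e x y hxy) (e u v huv)).1
  rw [e_mul_e_ne hxy huv (fun h => hne h.symm), map_zero] at h0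
  have h1 := congrFun h0.symm ⟨(a, v), hau.trans huv⟩
  rw [jmul_e_right, dif_pos ⟨hau, rfl⟩] at h1
  exact h1

lemma S2 {x y : X} (hxy : x < y) {w u b : X} (hwu : w < u) (hub : u < b)
    (hne : u ≠ x) : φ (e x y hxy) ⟨(u, b), hub⟩ = 0 := by
  have h0 := (hφ (e w u hwu) (e x y hxy)).2
  rw [e_mul_e_ne hwu hxy hne, map_zero] at h0
  have h1 := congrFun h0.symm ⟨(w, b), hwu.trans hub⟩
  rw [jmul_e_left, dif_pos ⟨rfl, hub⟩] at h1
  exact h1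

lemma S3 {x y : X} (hxy : x < y) {a : X} (hay : a < y) (hax : a ≠ x)
    {v : X} (hyv : y < v) : φ (e x y hxy) ⟨(a, y), hay⟩ = 0 := by
  have h0 := congrFun (switch φ hφ (e x y hxy) (e y v hyv)) ⟨(a, v), hay.trans hyv⟩
  rw [jmul_e_right, jmul_e_left, dif_pos ⟨hay, rfl⟩,
    dif_neg (fun h : a = x ∧ y < v => hax h.1)] at h0
  exact h0

lemma S5 {x y : X} (hxy : x < y) {w b : X} (hwx : w < x) (hxb : x < b)
    (hby : b ≠ y) : φ (e x y hxy) ⟨(x, b), hxb⟩ = 0 := by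
  have h0 := congrFun (switch φ hφ (e w x hwx) (e x y hxy)) ⟨(w, b), hwx.trans hxb⟩
  rw [jmul_e_right, jmul_e_left, dif_neg (fun h : w < x ∧ b = y => hby h.2),
    dif_pos ⟨rfl, hxb⟩] at h0
  exact h0.symm

lemma supp {x y : X} (hxy : x < y) {a b : X} (hab : a < b)
    (hne : (a, b) ≠ (x, y)) (hm : ¬ IsMin a ∨ ¬ IsMax b) :
    φ (e x y hxy) ⟨(a, b), hab⟩ = 0 := by
  by_cases hby : b = y
  · subst hby
    have hax : a ≠ x := fun h => hne (by rw [h])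
    by_cases hmin : IsMin a
    · have hmax : ¬ IsMax b := hm.resolve_left (fun h => h hmin)
      obtain ⟨v, hv⟩ := not_isMax_iff.mp hmax
      exact S3 φ hφ hxy hab hax hv
    · obtain ⟨w, hw⟩ := not_isMin_iff.mp hmin
      exact S2 φ hφ hxy hw hab hax
  · by_cases hmax : IsMax b
    · have hmin : ¬ IsMin a := hm.resolve_right (fun h => h hmax)
      by_cases hax : a = x
      · subst hax
        obtain ⟨w, hw⟩ := not_isMin_iff.mp hmin
        exact S5 φ hφ hxy hw hab hby
      · obtain ⟨w, hw⟩ := not_isMin_iff.mp hmin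
        exact S2 φ hφ hxy hw hab hax
    · obtain ⟨v, hv⟩ := not_isMax_iff.mp hmax
      exact S1 φ hφ hxy hab hv hby

lemma sig_step {x y v : X} (h1 : x < y) (h2 : y < v) :
    sig φ ⟨(x, y), h1⟩ = sig φ ⟨(x, v), h1.trans h2⟩ ∧
    sig φ ⟨(y, v), h2⟩ = sig φ ⟨(x, v), h1.trans h2⟩ := by
  have hA := (hφ (e x y h1) (e y v h2)).1
  have hB := (hφ (e x y h1) (e y v h2)).2
  rw [e_mul_e h1 h2] at hA hB
  constructor
  · have := congrFun hA ⟨(x, v), h1.trans h2⟩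
    rw [jmul_e_right, dif_pos ⟨h1, rfl⟩] at this
    exact this.symm
  · have := congrFun hB ⟨(x, v), h1.trans h2⟩
    rw [jmul_e_left, dif_pos ⟨rfl, h2⟩] at this
    exact this.symm

lemma phi_e_of_mid {x y v : X} (h1 : x < y) (h2 : y < v) :
    φ (e x v (h1.trans h2)) =
      sig φ ⟨(x, v), h1.trans h2⟩ • (e x v (h1.trans h2) : JRad X K) := by
  have hA := (hφ (e x y h1) (e y v h2)).1
  have hB := (hφ (e x y h1) (e y v h2)).2
  rw [e_mul_e h1 h2] at hA hB
  funext r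
  obtain ⟨⟨a, b⟩, hab⟩ := r
  by_cases hr : (a, b) = (x, v)
  · have ha : a = x := congrArg Prod.fst hr
    have hb : b = v := congrArg Prod.snd hr
    subst ha; subst hb
    show _ = _ * (e a b (h1.trans h2) : JRad X K) ⟨(a, b), hab⟩
    simp only [e, if_true, mul_one]
    rfl
  · show _ = _ * (e x v (h1.trans h2) : JRad X K) ⟨(a, b), hab⟩
    have he : (e x v (h1.trans h2) : JRad X K) ⟨(a, b), hab⟩ = 0 := by
      simp only [e, if_neg hr]
    rw [he, mul_zero]
    by_cases hc : a < y ∧ b = v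
    · have := congrFun hB ⟨(a, b), hab⟩
      rw [jmul_e_left] at this
      rw [this, dif_neg]
      rintro ⟨rfl, -⟩
      exact hr (by rw [hc.2])
    · have := congrFun hA ⟨(a, b), hab⟩
      rw [jmul_e_right, dif_neg hc] at this
      exact this

lemma sig_le {a b c d : X} (hab : a ≤ b) (hbc : b < c) (hcd : c ≤ d) :
    sig φ ⟨(b, c), hbc⟩ =
      sig φ ⟨(a, d), lt_of_le_of_lt hab (lt_of_lt_of_le hbc hcd)⟩ := by
  have step1 : sig φ ⟨(b, c), hbc⟩ =
      sig φ ⟨(b, d), lt_of_lt_of_le hbc hcd⟩ := by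
    rcases lt_or_eq_of_le hcd with h | h
    · exact (sig_step φ hφ hbc h).1
    · subst h; rfl
  rw [step1]
  rcases lt_or_eq_of_le hab with h | h
  · exact (sig_step φ hφ h (lt_of_lt_of_le hbc hcd)).2
  · subst h; rfl

lemma const_sig : ConstOnChains (sig φ) := by
  rintro ⟨⟨x1, y1⟩, hp⟩ ⟨⟨x2, y2⟩, hq⟩ ⟨C, hC, hx1, hy1, hx2, hy2⟩
  rcases hC.total hx1 hx2 with hm | hm <;> rcases hC.total hy1 hy2 with hM | hM
  · rw [sig_le φ hφ (le_refl x1) hp hM, sig_le φ hφ hm hq (le_refl y2)]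
  · rw [sig_le φ hφ hm hq hM]
  · rw [sig_le φ hφ hm hp hM]
  · rw [sig_le φ hφ hm hp (le_refl y1), sig_le φ hφ (le_refl x2) hq hM]

lemma eta_e_supp (r : IncPair X) (hm : ¬ IsMin r.1.1 ∨ ¬ IsMax r.1.2)
    (p : IncPair X) :
    (φ - phiSigma (sig φ)) (e p.1.1 p.1.2 p.2) r = 0 := by
  rw [LinearMap.sub_apply]
  show φ (e p.1.1 p.1.2 p.2) r - sig φ r * (e p.1.1 p.1.2 p.2 : JRad X K) r = 0
  by_cases hrp : r = p
  · subst hrp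
    have h1 : (e r.1.1 r.1.2 r.2 : JRad X K) r = 1 := by simp [e]
    rw [h1, mul_one, sub_eq_zero]
    rfl
  · have hne : (r.1.1, r.1.2) ≠ (p.1.1, p.1.2) := by
      simpa [Subtype.ext_iff, Prod.ext_iff] using hrp
    have h1 : (e p.1.1 p.1.2 p.2 : JRad X K) r = 0 := by
      simp only [e]
      rw [if_neg]
      intro hc
      exact hne (by rw [← hc])
    have h2 : φ (e p.1.1 p.1.2 p.2) r = 0 := supp φ hφ p.2 r.2 hne hm
    rw [h1, h2, mul_zero, sub_zero]

lemma eta_supp (f : JRad X K) (r : IncPair X)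
    (hm : ¬ IsMin r.1.1 ∨ ¬ IsMax r.1.2) :
    (φ - phiSigma (sig φ)) f r = 0 := by
  conv_lhs => rw [sum_basis f]
  rw [map_sum, Finset.sum_apply]
  refine Finset.sum_eq_zero fun p _ => ?_
  rw [map_smul, Pi.smul_apply, eta_e_supp φ hφ r hm p, smul_zero]

end Phi

end Stmt13Aux

theorem stmt13 {X K : Type*} [PartialOrder X] [Fintype X] [Field K]
    (φ : JRad X K →ₗ[K] JRad X K) :
    (∀ f g : JRad X K,
        φ (jmul f g) = jmul (φ f) g ∧ φ (jmul f g) = jmul f (φ g)) ↔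
    ∃ σ : IncPair X → K, ConstOnChains σ ∧
      ∃ η : JRad X K →ₗ[K] JRad X K,
        (∀ f g : JRad X K, jmul (η f) g = 0 ∧ jmul g (η f) = 0) ∧
        (∀ f : JRad X K,
          f ∈ Submodule.span K {h : JRad X K | ∃ a b : JRad X K, h = jmul a b} →
            η f = 0) ∧
        φ = phiSigma σ + η := by
  constructor
  · intro hφ
    refine ⟨Stmt13Aux.sig φ, Stmt13Aux.const_sig φ hφ,
      φ - phiSigma (Stmt13Aux.sig φ), ?_, ?_, by abel⟩
    · intro f g
      exact Stmt13Aux.jmul_ann (Stmt13Aux.eta_supp φ hφ f) g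
    · intro f hf
      refine Submodule.span_induction ?_ (map_zero _) ?_ ?_ hf
      · rintro x ⟨a, b, rfl⟩
        have h2 : φ a = phiSigma (Stmt13Aux.sig φ) a
            + (φ - phiSigma (Stmt13Aux.sig φ)) a := by
          rw [LinearMap.sub_apply]; abel
        rw [LinearMap.sub_apply, (hφ a b).1, h2, Stmt13Aux.jmul_add_left,
          (Stmt13Aux.jmul_ann (Stmt13Aux.eta_supp φ hφ a) b).1, add_zero,
          ← (Stmt13Aux.phiSigma_jmul (Stmt13Aux.const_sig φ hφ) a b).1, sub_self]
      · intro x y _ _ hx hy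
        rw [map_add, hx, hy, add_zero]
      · intro c x _ hx
        rw [map_smul, hx, smul_zero]
  · rintro ⟨σ, hσ, η, hann, hspan, rfl⟩ f g
    have hη : η (jmul f g) = 0 := hspan _ (Submodule.subset_span ⟨f, g, rfl⟩)
    constructor
    · rw [LinearMap.add_apply, LinearMap.add_apply, hη, add_zero,
        Stmt13Aux.jmul_add_left, (hann f g).1, add_zero]
      exact (Stmt13Aux.phiSigma_jmul hσ f g).1
    · rw [LinearMap.add_apply, LinearMap.add_apply, hη, add_zero,
        Stmt13Aux.jmul_add_right, (hann g f).2, add_zero]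
      exact (Stmt13Aux.phiSigma_jmul hσ f g).2
end

section
/- Let X be a finite poset, K a field, and * a bilinear product on J(I(X,K)) such that * and · are (12)-matching, i.e. (a·b)*c = a*(b·c) and (a*b)·c = a·(b*c) for all a,b,c. If x < y, u < v, y ≠ u, and l(x,y) > 1 or l(u,v) > 1, then e_{xy} * e_{uv} = 0. -/
open scoped Classical

lemma jmul_e_e_s15 {X K : Type*} [PartialOrder X] [Fintype X] [Field K]
    {x z y : X} (hxz : x < z) (hzy : z < y) :
    jmul (e x z hxz) (e z y hzy) = (e x y (hxz.trans hzy) : JRad X K) := by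
  funext r
  obtain ⟨⟨a, b⟩, hab⟩ := r
  simp only [jmul, e]
  by_cases hr : (a, b) = (x, y)
  · rw [Prod.mk.injEq] at hr
    obtain ⟨rfl, rfl⟩ := hr
    rw [if_pos rfl]
    rw [Finset.sum_eq_single_of_mem z (Finset.mem_univ z)]
    · rw [dif_pos ⟨hxz, hzy⟩, if_pos rfl, if_pos rfl, one_mul]
    · intro w _ hw
      split
      · rw [if_neg (by simp [hw]), zero_mul]
      · rfl
  · rw [if_neg hr]
    apply Finset.sum_eq_zero
    intro w _
    by_cases h : a < w ∧ w < b
    · rw [dif_pos h]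
      rcases not_and_or.mp (fun habs => hr (Prod.ext habs.1 habs.2)) with ha | hb
      · exact mul_eq_zero_of_left (if_neg (fun hc => ha ((Prod.ext_iff.mp hc).1 : a = x))) _
      · exact mul_eq_zero_of_right _ (if_neg (fun hc => hb ((Prod.ext_iff.mp hc).2 : b = y)))
    · rw [dif_neg h]

lemma jmul_e_e_ne {X K : Type*} [PartialOrder X] [Fintype X] [Field K]
    {x y u v : X} (hxy : x < y) (huv : u < v) (hyu : y ≠ u) :
    jmul (e x y hxy) (e u v huv) = (0 : JRad X K) := by
  funext r
  obtain ⟨⟨a, b⟩, hab⟩ := r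
  simp only [jmul, e, Pi.zero_apply]
  apply Finset.sum_eq_zero
  intro w _
  by_cases h : a < w ∧ w < b
  · rw [dif_pos h]
    by_cases h1 : w = y
    · subst h1
      exact mul_eq_zero_of_right _ (if_neg (fun hc => hyu (Prod.ext_iff.mp hc).1))
    · exact mul_eq_zero_of_left (if_neg (fun hc => h1 (Prod.ext_iff.mp hc).2)) _
  · rw [dif_neg h]

theorem stmt15 {X K : Type*} [PartialOrder X] [Fintype X] [Field K]
    (m : JRad X K →ₗ[K] JRad X K →ₗ[K] JRad X K)
    (hm : ∀ a b c : JRad X K,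
      m (jmul a b) c = m a (jmul b c) ∧ jmul (m a b) c = jmul a (m b c))
    (x y u v : X) (hxy : x < y) (huv : u < v) (hyu : y ≠ u)
    (hl : (∃ z : X, x < z ∧ z < y) ∨ (∃ z : X, u < z ∧ z < v)) :
    m (e x y hxy) (e u v huv) = 0 := by
  rcases hl with ⟨z, h1, h2⟩ | ⟨z, h1, h2⟩
  · have he : (e x y hxy : JRad X K) = jmul (e x z h1) (e z y h2) := (jmul_e_e_s15 h1 h2).symm
    rw [he, (hm _ _ _).1, jmul_e_e_ne h2 huv hyu, map_zero]
  · have he : (e u v huv : JRad X K) = jmul (e u z h1) (e z v h2) := (jmul_e_e_s15 h1 h2).symm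
    rw [he, ← (hm _ _ _).1, jmul_e_e_ne hxy h1 hyu, map_zero, LinearMap.zero_apply]
end

section
/- Let X be a finite poset, K a field, and * a bilinear product on J(I(X,K)) totally compatible with the incidence product ·. If x < y < z and l(x,y) > 1 or l(y,z) > 1, then e_{xy} * e_{yz} is a scalar multiple of e_{xz}. -/
open scoped Classical

lemma jmul_e {X K : Type*} [PartialOrder X] [Fintype X] [Field K]
    {x u y : X} (h1 : x < u) (h2 : u < y) :
    jmul (e x u h1) (e u y h2) = e x y (K := K) (h1.trans h2) := by
  funext r
  have hs : jmul (e (K := K) x u h1) (e u y h2) r =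
      (if h : r.1.1 < u ∧ u < r.1.2 then
        e (K := K) x u h1 ⟨(r.1.1, u), h.1⟩ * e u y h2 ⟨(u, r.1.2), h.2⟩ else 0) := by
    apply Finset.sum_eq_single_of_mem u (Finset.mem_univ u)
    intro b _ hb
    split_ifs with h
    · simp [e, Prod.ext_iff, hb]
    · rfl
  rw [hs]
  by_cases hr : r.1 = (x, y)
  · have hx : r.1.1 = x := by rw [hr]
    have hy : r.1.2 = y := by rw [hr]
    rw [dif_pos ⟨by rw [hx]; exact h1, by rw [hy]; exact h2⟩]
    simp [e, Prod.ext_iff, hx, hy, hr]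
  · split_ifs with h
    · simp only [e, if_neg hr]
      by_cases hx : r.1.1 = x
      · have hy : r.1.2 ≠ y := fun hy => hr (Prod.ext hx hy)
        simp [Prod.ext_iff, hy]
      · simp [Prod.ext_iff, hx]
    · simp [e, hr]

lemma jmul_left_support {X K : Type*} [PartialOrder X] [Fintype X] [Field K]
    {x u : X} (h : x < u) (g : JRad X K) (r : IncPair X) (hr : r.1.1 ≠ x) :
    jmul (e x u h) g r = 0 := by
  apply Finset.sum_eq_zero
  intro w _
  split_ifs with hw
  · simp [e, Prod.ext_iff, hr]
  · rfl

lemma jmul_right_support {X K : Type*} [PartialOrder X] [Fintype X] [Field K]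
    {u z : X} (h : u < z) (g : JRad X K) (r : IncPair X) (hr : r.1.2 ≠ z) :
    jmul g (e u z h) r = 0 := by
  apply Finset.sum_eq_zero
  intro w _
  split_ifs with hw
  · simp [e, Prod.ext_iff, hr]
  · rfl

lemma support_lemma {X K : Type*} [PartialOrder X] [Field K] {x z : X} (hxz : x < z)
    (f : JRad X K) (h1 : ∀ r : IncPair X, r.1.1 ≠ x → f r = 0)
    (h2 : ∀ r : IncPair X, r.1.2 ≠ z → f r = 0) :
    ∃ c : K, f = c • e x z hxz := by
  refine ⟨f ⟨(x, z), hxz⟩, funext fun r => ?_⟩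
  simp only [Pi.smul_apply, e, smul_eq_mul]
  by_cases hr : r.1 = (x, z)
  · rw [if_pos hr, mul_one]
    congr 1
    exact Subtype.ext hr
  · rw [if_neg hr, mul_zero]
    by_cases hx : r.1.1 = x
    · exact h2 r (fun hz => hr (Prod.ext hx hz))
    · exact h1 r hx

theorem stmt16 {X K : Type*} [PartialOrder X] [Fintype X] [Field K]
    (m : JRad X K →ₗ[K] JRad X K →ₗ[K] JRad X K)
    (hm : TotComp jmul (fun a b => m a b))
    (x y z : X) (hxy : x < y) (hyz : y < z)
    (hl : (∃ u : X, x < u ∧ u < y) ∨ (∃ u : X, y < u ∧ u < z)) :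
    ∃ c : K, m (e x y hxy) (e y z hyz) = c • e x z (hxy.trans hyz) := by
  apply support_lemma
  · intro r hr
    rcases hl with ⟨u, hxu, huy⟩ | ⟨u, hyu, huz⟩
    · have key : m (e x y hxy) (e y z hyz)
          = jmul (e x u hxu) (m (e u y huy) (e y z hyz)) := by
        have h0 : jmul (e x u hxu) (e u y huy) = e (K := K) x y hxy := jmul_e hxu huy
        have h1 := (hm (e x u hxu) (e u y huy) (e y z hyz)).1
        have h2 := (hm (e x u hxu) (e u y huy) (e y z hyz)).2.1
        rw [h0] at h1
        exact h1.trans h2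
      rw [key]
      exact jmul_left_support hxu _ r hr
    · have key : m (e x y hxy) (e y z hyz)
          = jmul (e x y hxy) (m (e y u hyu) (e u z huz)) := by
        have h0 : jmul (e y u hyu) (e u z huz) = e (K := K) y z hyz := jmul_e hyu huz
        have h3 := (hm (e x y hxy) (e y u hyu) (e u z huz)).2.2
        rw [h0] at h3
        exact h3.symm
      rw [key]
      exact jmul_left_support hxy _ r hr
  · intro r hr
    rcases hl with ⟨u, hxu, huy⟩ | ⟨u, hyu, huz⟩
    · have key : m (e x y hxy) (e y z hyz)
          = jmul (m (e x u hxu) (e u y huy)) (e y z hyz) := by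
        have h0 : jmul (e x u hxu) (e u y huy) = e (K := K) x y hxy := jmul_e hxu huy
        have h1 := (hm (e x u hxu) (e u y huy) (e y z hyz)).1
        rw [h0] at h1
        exact h1
      rw [key]
      exact jmul_right_support hyz _ r hr
    · have key : m (e x y hxy) (e y z hyz)
          = jmul (m (e x y hxy) (e y u hyu)) (e u z huz) := by
        have h0 : jmul (e y u hyu) (e u z huz) = e (K := K) y z hyz := jmul_e hyu huz
        have h2 := (hm (e x y hxy) (e y u hyu) (e u z huz)).2.1
        have h3 := (hm (e x y hxy) (e y u hyu) (e u z huz)).2.2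
        rw [h0] at h3
        exact h3.symm.trans h2.symm
      rw [key]
      exact jmul_right_support huz _ r hr
end

section
/- Let X be a finite poset and 𝒞 an equivalence class of the relation ≈ on X³_< (generated by pairs of chained triples). Then the bilinear product *_𝒞 on J(I(X,K)) defined by e_{xy} *_𝒞 e_{uv} = e_{xv} if y = u and (x,y,v) ∈ 𝒞, and 0 otherwise, is an associative product totally compatible with the incidence product ·. -/
open scoped Classical

/-- Triples `x < y < z` in `X`. -/
abbrev IncTriple (X : Type*) [PartialOrder X] :=
  {t : X × X × X // t.1 < t.2.1 ∧ t.2.1 < t.2.2}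

/-- Two triples are chained if some chain of `X` contains all six elements. -/
def Chained {X : Type*} [PartialOrder X] (s t : IncTriple X) : Prop :=
  ∃ C : Set X, IsChain (· ≤ ·) C ∧
    s.1.1 ∈ C ∧ s.1.2.1 ∈ C ∧ s.1.2.2 ∈ C ∧
    t.1.1 ∈ C ∧ t.1.2.1 ∈ C ∧ t.1.2.2 ∈ C

/-- `𝒞` is an equivalence class of the relation `≈` on `X³_<` generated by
pairs of chained triples. -/
def IsApproxClass {X : Type*} [PartialOrder X] (𝒞 : Set (IncTriple X)) : Prop :=
  ∃ t₀ : IncTriple X, 𝒞 = {t | Relation.EqvGen Chained t₀ t}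

/-- The product `*_𝒞` on `J(I(X,K))`:
`e_{xy} *_𝒞 e_{uv} = e_{xv}` if `y = u` and `(x,y,v) ∈ 𝒞`, and `0` otherwise. -/
noncomputable def starC {X K : Type*} [PartialOrder X] [Fintype X] [Field K]
    (𝒞 : Set (IncTriple X)) (f g : JRad X K) : JRad X K :=
  fun r => ∑ z : X, if h : r.1.1 < z ∧ z < r.1.2 then
    (if (⟨(r.1.1, z, r.1.2), h⟩ : IncTriple X) ∈ 𝒞 then
      f ⟨(r.1.1, z), h.1⟩ * g ⟨(z, r.1.2), h.2⟩ else 0) else 0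

section Aux

variable {X K : Type*} [PartialOrder X] [Fintype X] [Field K]

/-- A general "weighted" incidence-type product. -/
noncomputable def Amul (χ : IncTriple X → K) (f g : JRad X K) : JRad X K :=
  fun r => ∑ z : X, if h : r.1.1 < z ∧ z < r.1.2 then
    χ ⟨(r.1.1, z, r.1.2), h⟩ * f ⟨(r.1.1, z), h.1⟩ * g ⟨(z, r.1.2), h.2⟩ else 0

lemma starC_eq_Amul (𝒞 : Set (IncTriple X)) (f g : JRad X K) :
    starC 𝒞 f g = Amul (fun t => if t ∈ 𝒞 then (1 : K) else 0) f g := by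
  funext r
  unfold starC Amul
  refine Finset.sum_congr rfl fun z _ => ?_
  split
  · split <;> rename_i hm <;> simp [hm]
  · rfl

lemma jmul_eq_Amul (f g : JRad X K) :
    jmul f g = Amul (fun _ => (1 : K)) f g := by
  funext r
  unfold jmul Amul
  refine Finset.sum_congr rfl fun z _ => ?_
  split
  · rw [one_mul]
  · rfl

lemma Amul_assoc (χ₁ χ₂ χ₃ χ₄ : IncTriple X → K)
    (hw : ∀ (x y z w : X) (h1 : x < y) (h2 : y < z) (h3 : z < w)
      (p : x < z ∧ z < w) (q : x < y ∧ y < z) (p' : x < y ∧ y < w) (q' : y < z ∧ z < w),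
      χ₁ ⟨(x, z, w), p⟩ * χ₂ ⟨(x, y, z), q⟩ = χ₃ ⟨(x, y, w), p'⟩ * χ₄ ⟨(y, z, w), q'⟩)
    (f g h : JRad X K) :
    Amul χ₁ (Amul χ₂ f g) h = Amul χ₃ f (Amul χ₄ g h) := by
  funext r
  obtain ⟨⟨x, w⟩, hxw⟩ := r
  simp only [Amul]
  calc
    (∑ z : X, if hz : x < z ∧ z < w then
        χ₁ ⟨(x, z, w), hz⟩ *
          (∑ y : X, if hy : x < y ∧ y < z then
            χ₂ ⟨(x, y, z), hy⟩ * f ⟨(x, y), hy.1⟩ * g ⟨(y, z), hy.2⟩ else 0) *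
          h ⟨(z, w), hz.2⟩ else 0)
      = ∑ z : X, ∑ y : X, if hc : (x < z ∧ z < w) ∧ (x < y ∧ y < z) then
          χ₁ ⟨(x, z, w), hc.1⟩ * χ₂ ⟨(x, y, z), hc.2⟩ *
            (f ⟨(x, y), hc.2.1⟩ * g ⟨(y, z), hc.2.2⟩ * h ⟨(z, w), hc.1.2⟩) else 0 := by
        refine Finset.sum_congr rfl fun z _ => ?_
        by_cases hz : x < z ∧ z < w
        · rw [dif_pos hz, Finset.mul_sum, Finset.sum_mul]
          refine Finset.sum_congr rfl fun y _ => ?_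
          by_cases hy : x < y ∧ y < z
          · rw [dif_pos hy, dif_pos (⟨hz, hy⟩ : (x < z ∧ z < w) ∧ (x < y ∧ y < z))]
            ring
          · rw [dif_neg hy, dif_neg (fun hc => hy hc.2)]
            ring
        · rw [dif_neg hz]
          exact (Finset.sum_eq_zero fun y _ => dif_neg (fun hc => hz hc.1)).symm
    _ = ∑ z : X, ∑ y : X, if hc : (x < y ∧ y < w) ∧ (y < z ∧ z < w) then
          χ₃ ⟨(x, y, w), hc.1⟩ * χ₄ ⟨(y, z, w), hc.2⟩ *
            (f ⟨(x, y), hc.1.1⟩ * g ⟨(y, z), hc.2.1⟩ * h ⟨(z, w), hc.2.2⟩) else 0 := by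
        refine Finset.sum_congr rfl fun z _ => Finset.sum_congr rfl fun y _ => ?_
        by_cases hc : x < y ∧ y < z ∧ z < w
        · obtain ⟨h1, h2, h3⟩ := hc
          have pT : (x < z ∧ z < w) ∧ (x < y ∧ y < z) := ⟨⟨h1.trans h2, h3⟩, h1, h2⟩
          have pS : (x < y ∧ y < w) ∧ (y < z ∧ z < w) := ⟨⟨h1, h2.trans h3⟩, h2, h3⟩
          rw [dif_pos pT, dif_pos pS, hw x y z w h1 h2 h3 pT.1 pT.2 pS.1 pS.2]
        · rw [dif_neg (fun h' => hc ⟨h'.2.1, h'.2.2, h'.1.2⟩),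
            dif_neg (fun h' => hc ⟨h'.1.1, h'.2.1, h'.2.2⟩)]
    _ = ∑ y : X, ∑ z : X, if hc : (x < y ∧ y < w) ∧ (y < z ∧ z < w) then
          χ₃ ⟨(x, y, w), hc.1⟩ * χ₄ ⟨(y, z, w), hc.2⟩ *
            (f ⟨(x, y), hc.1.1⟩ * g ⟨(y, z), hc.2.1⟩ * h ⟨(z, w), hc.2.2⟩) else 0 :=
        Finset.sum_comm
    _ = ∑ y : X, if hy : x < y ∧ y < w then
          χ₃ ⟨(x, y, w), hy⟩ * f ⟨(x, y), hy.1⟩ *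
            (∑ z : X, if hz : y < z ∧ z < w then
              χ₄ ⟨(y, z, w), hz⟩ * g ⟨(y, z), hz.1⟩ * h ⟨(z, w), hz.2⟩ else 0) else 0 := by
        refine Finset.sum_congr rfl fun y _ => ?_
        by_cases hy : x < y ∧ y < w
        · rw [dif_pos hy, Finset.mul_sum]
          refine Finset.sum_congr rfl fun z _ => ?_
          by_cases hz : y < z ∧ z < w
          · rw [dif_pos hz, dif_pos (⟨hy, hz⟩ : (x < y ∧ y < w) ∧ (y < z ∧ z < w))]
            ring
          · rw [dif_neg hz, dif_neg (fun hc => hz hc.2)]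
            ring
        · rw [dif_neg hy]
          exact Finset.sum_eq_zero fun z _ => dif_neg (fun hc => hy hc.1)

lemma isChain4 {x y z w : X} (h1 : x ≤ y) (h2 : y ≤ z) (h3 : z ≤ w) :
    IsChain (· ≤ ·) ({x, y, z, w} : Set X) := by
  intro a ha b hb _
  simp only [Set.mem_insert_iff, Set.mem_singleton_iff] at ha hb
  rcases ha with rfl | rfl | rfl | rfl <;> rcases hb with rfl | rfl | rfl | rfl <;>
    first
      | exact Or.inl le_rfl
      | exact Or.inl h1 | exact Or.inr h1
      | exact Or.inl h2 | exact Or.inr h2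
      | exact Or.inl h3 | exact Or.inr h3
      | exact Or.inl (h1.trans h2) | exact Or.inr (h1.trans h2)
      | exact Or.inl (h2.trans h3) | exact Or.inr (h2.trans h3)
      | exact Or.inl (h1.trans (h2.trans h3)) | exact Or.inr (h1.trans (h2.trans h3))

lemma mem_class_iff {𝒞 : Set (IncTriple X)} (h𝒞 : IsApproxClass 𝒞)
    {s t : IncTriple X} (h : Chained s t) : s ∈ 𝒞 ↔ t ∈ 𝒞 := by
  obtain ⟨t₀, rfl⟩ := h𝒞
  have hsym : Chained t s := by
    obtain ⟨C, hC, a, b, c, d, e', f⟩ := h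
    exact ⟨C, hC, d, e', f, a, b, c⟩
  constructor
  · intro hs
    exact Relation.EqvGen.trans _ _ _ hs (Relation.EqvGen.rel _ _ h)
  · intro ht
    exact Relation.EqvGen.trans _ _ _ ht (Relation.EqvGen.rel _ _ hsym)


lemma mem4 {𝒞 : Set (IncTriple X)} (h𝒞 : IsApproxClass 𝒞)
    {x y z w : X} (h1 : x < y) (h2 : y < z) (h3 : z < w)
    (p : x < z ∧ z < w) (q : x < y ∧ y < z) (p' : x < y ∧ y < w) (q' : y < z ∧ z < w) :
    ((⟨(x, y, z), q⟩ : IncTriple X) ∈ 𝒞 ↔ (⟨(x, y, w), p'⟩ : IncTriple X) ∈ 𝒞) ∧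
    ((⟨(x, y, z), q⟩ : IncTriple X) ∈ 𝒞 ↔ (⟨(x, z, w), p⟩ : IncTriple X) ∈ 𝒞) ∧
    ((⟨(x, y, z), q⟩ : IncTriple X) ∈ 𝒞 ↔ (⟨(y, z, w), q'⟩ : IncTriple X) ∈ 𝒞) := by
  have hC := isChain4 h1.le h2.le h3.le
  refine ⟨mem_class_iff h𝒞 ⟨{x, y, z, w}, hC, ?_, ?_, ?_, ?_, ?_, ?_⟩,
    mem_class_iff h𝒞 ⟨{x, y, z, w}, hC, ?_, ?_, ?_, ?_, ?_, ?_⟩,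
    mem_class_iff h𝒞 ⟨{x, y, z, w}, hC, ?_, ?_, ?_, ?_, ?_, ?_⟩⟩ <;> simp

lemma hwII {𝒞 : Set (IncTriple X)} (h𝒞 : IsApproxClass 𝒞)
    (x y z w : X) (h1 : x < y) (h2 : y < z) (h3 : z < w)
    (p : x < z ∧ z < w) (q : x < y ∧ y < z) (p' : x < y ∧ y < w) (q' : y < z ∧ z < w) :
    (if (⟨(x, z, w), p⟩ : IncTriple X) ∈ 𝒞 then (1 : K) else 0) *
      (if (⟨(x, y, z), q⟩ : IncTriple X) ∈ 𝒞 then (1 : K) else 0) =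
    (if (⟨(x, y, w), p'⟩ : IncTriple X) ∈ 𝒞 then (1 : K) else 0) *
      (if (⟨(y, z, w), q'⟩ : IncTriple X) ∈ 𝒞 then (1 : K) else 0) := by
  obtain ⟨i1, i2, i3⟩ := mem4 h𝒞 h1 h2 h3 p q p' q'
  split_ifs <;> simp_all

lemma hwIO {𝒞 : Set (IncTriple X)} (h𝒞 : IsApproxClass 𝒞)
    (x y z w : X) (h1 : x < y) (h2 : y < z) (h3 : z < w)
    (p : x < z ∧ z < w) (q : x < y ∧ y < z) (p' : x < y ∧ y < w) (q' : y < z ∧ z < w) :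
    (if (⟨(x, z, w), p⟩ : IncTriple X) ∈ 𝒞 then (1 : K) else 0) * 1 =
    1 * (if (⟨(y, z, w), q'⟩ : IncTriple X) ∈ 𝒞 then (1 : K) else 0) := by
  obtain ⟨i1, i2, i3⟩ := mem4 h𝒞 h1 h2 h3 p q p' q'
  split_ifs <;> simp_all

lemma hwOI {𝒞 : Set (IncTriple X)} (h𝒞 : IsApproxClass 𝒞)
    (x y z w : X) (h1 : x < y) (h2 : y < z) (h3 : z < w)
    (p : x < z ∧ z < w) (q : x < y ∧ y < z) (p' : x < y ∧ y < w) (q' : y < z ∧ z < w) :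
    1 * (if (⟨(x, y, z), q⟩ : IncTriple X) ∈ 𝒞 then (1 : K) else 0) =
    1 * (if (⟨(y, z, w), q'⟩ : IncTriple X) ∈ 𝒞 then (1 : K) else 0) := by
  obtain ⟨i1, i2, i3⟩ := mem4 h𝒞 h1 h2 h3 p q p' q'
  split_ifs <;> simp_all

lemma hwOI' {𝒞 : Set (IncTriple X)} (h𝒞 : IsApproxClass 𝒞)
    (x y z w : X) (h1 : x < y) (h2 : y < z) (h3 : z < w)
    (p : x < z ∧ z < w) (q : x < y ∧ y < z) (p' : x < y ∧ y < w) (q' : y < z ∧ z < w) :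
    1 * (if (⟨(x, y, z), q⟩ : IncTriple X) ∈ 𝒞 then (1 : K) else 0) =
    (if (⟨(x, y, w), p'⟩ : IncTriple X) ∈ 𝒞 then (1 : K) else 0) * 1 := by
  obtain ⟨i1, i2, i3⟩ := mem4 h𝒞 h1 h2 h3 p q p' q'
  split_ifs <;> simp_all

end Aux

theorem stmt17 {X K : Type*} [PartialOrder X] [Fintype X] [Field K]
    (𝒞 : Set (IncTriple X)) (h𝒞 : IsApproxClass 𝒞) :
    IsAssoc (starC (X := X) (K := K) 𝒞) ∧
      TotComp (jmul (X := X) (K := K)) (starC 𝒞) := by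
  have E0 := fun a b c : JRad X K => Amul_assoc
    (fun t => if t ∈ 𝒞 then (1 : K) else 0) (fun t => if t ∈ 𝒞 then (1 : K) else 0)
    (fun t => if t ∈ 𝒞 then (1 : K) else 0) (fun t => if t ∈ 𝒞 then (1 : K) else 0)
    (fun x y z w h1 h2 h3 p q p' q' => hwII h𝒞 x y z w h1 h2 h3 p q p' q') a b c
  have E1 := fun a b c : JRad X K => Amul_assoc
    (fun t => if t ∈ 𝒞 then (1 : K) else 0) (fun _ => (1 : K))
    (fun _ => (1 : K)) (fun t => if t ∈ 𝒞 then (1 : K) else 0)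
    (fun x y z w h1 h2 h3 p q p' q' => hwIO h𝒞 x y z w h1 h2 h3 p q p' q') a b c
  have E2 := fun a b c : JRad X K => Amul_assoc
    (fun _ => (1 : K)) (fun t => if t ∈ 𝒞 then (1 : K) else 0)
    (fun _ => (1 : K)) (fun t => if t ∈ 𝒞 then (1 : K) else 0)
    (fun x y z w h1 h2 h3 p q p' q' => hwOI h𝒞 x y z w h1 h2 h3 p q p' q') a b c
  have E3 := fun a b c : JRad X K => Amul_assoc
    (fun _ => (1 : K)) (fun t => if t ∈ 𝒞 then (1 : K) else 0)
    (fun t => if t ∈ 𝒞 then (1 : K) else 0) (fun _ => (1 : K))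
    (fun x y z w h1 h2 h3 p q p' q' => hwOI' h𝒞 x y z w h1 h2 h3 p q p' q') a b c
  constructor
  · intro a b c
    simp only [starC_eq_Amul]
    exact E0 a b c
  · intro a b c
    refine ⟨?_, ?_, ?_⟩ <;> simp only [starC_eq_Amul, jmul_eq_Amul]
    · exact (E1 a b c).trans (E2 a b c).symm
    · exact E2 a b c
    · exact (E2 a b c).symm.trans (E3 a b c)
end

section
/- Let X be a finite poset and 𝒞, 𝒟 distinct ≈-classes of X³_<. Then the structures *_𝒞 and *_𝒟 on J(I(X,K)) are mutually annihilating: all triple products mixing *_𝒞 and *_𝒟 vanish. -/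
open scoped Classical

lemma chain4 {X : Type*} [PartialOrder X] {a b c d : X}
    (h1 : a < b) (h2 : b < c) (h3 : c < d) :
    IsChain (· ≤ ·) ({a, b, c, d} : Set X) := by
  intro u hu v hv _
  simp only [Set.mem_insert_iff, Set.mem_singleton_iff] at hu hv
  rcases hu with rfl | rfl | rfl | rfl <;> rcases hv with rfl | rfl | rfl | rfl <;>
    first
      | exact Or.inl le_rfl
      | exact Or.inl (le_of_lt (by first | assumption | exact h1.trans h2 | exact h2.trans h3 | exact (h1.trans h2).trans h3))
      | exact Or.inr (le_of_lt (by first | assumption | exact h1.trans h2 | exact h2.trans h3 | exact (h1.trans h2).trans h3))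

lemma class_eq_of_chained {X : Type*} [PartialOrder X]
    {𝒞 𝒟 : Set (IncTriple X)} (h𝒞 : IsApproxClass 𝒞) (h𝒟 : IsApproxClass 𝒟)
    {s t : IncTriple X} (hs : s ∈ 𝒞) (ht : t ∈ 𝒟) (hc : Chained s t) :
    𝒞 = 𝒟 := by
  obtain ⟨t₀, rfl⟩ := h𝒞
  obtain ⟨t₁, rfl⟩ := h𝒟
  have h01 : Relation.EqvGen Chained t₀ t₁ :=
    (hs.trans _ _ _ (Relation.EqvGen.rel _ _ hc)).trans _ _ _ (ht.symm _ _)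
  ext u
  constructor
  · intro hu; exact (h01.symm _ _).trans _ _ _ hu
  · intro hu; exact h01.trans _ _ _ hu

lemma chained_left {X : Type*} [PartialOrder X] {x y z w : X}
    (h1 : x < y) (h2 : y < z) (h3 : z < w) :
    Chained (⟨(x, y, z), h1, h2⟩ : IncTriple X) ⟨(x, z, w), h1.trans h2, h3⟩ :=
  ⟨{x, y, z, w}, chain4 h1 h2 h3, by simp, by simp, by simp, by simp, by simp, by simp⟩

lemma chained_right {X : Type*} [PartialOrder X] {x z y w : X}
    (h1 : x < z) (h2 : z < y) (h3 : y < w) :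
    Chained (⟨(z, y, w), h2, h3⟩ : IncTriple X) ⟨(x, z, w), h1, h2.trans h3⟩ :=
  ⟨{x, z, y, w}, chain4 h1 h2 h3, by simp, by simp, by simp, by simp, by simp, by simp⟩

theorem stmt18 {X K : Type*} [PartialOrder X] [Fintype X] [Field K]
    (𝒞 𝒟 : Set (IncTriple X)) (h𝒞 : IsApproxClass 𝒞) (h𝒟 : IsApproxClass 𝒟)
    (hne : 𝒞 ≠ 𝒟) :
    ∀ f g h : JRad X K,
      starC 𝒟 (starC 𝒞 f g) h = 0 ∧
      starC 𝒞 (starC 𝒟 f g) h = 0 ∧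
      starC 𝒞 f (starC 𝒟 g h) = 0 ∧
      starC 𝒟 f (starC 𝒞 g h) = 0 := by
  intro f g h
  have key : ∀ (𝒞 𝒟 : Set (IncTriple X)), IsApproxClass 𝒞 → IsApproxClass 𝒟 →
      𝒞 ≠ 𝒟 → ∀ f g h : JRad X K, starC 𝒟 (starC 𝒞 f g) h = 0 := by
    intro 𝒞 𝒟 h𝒞 h𝒟 hne f g h
    funext r
    show (∑ z : X, _) = (0 : K)
    refine Finset.sum_eq_zero fun z _ => ?_
    split
    · next hz =>
      split
      · next hmemD =>
        have : starC 𝒞 f g ⟨(r.1.1, z), hz.1⟩ = 0 := by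
          show (∑ y : X, _) = (0 : K)
          refine Finset.sum_eq_zero fun y _ => ?_
          split
          · next hy =>
            split
            · next hmemC =>
              exact absurd (class_eq_of_chained h𝒞 h𝒟 hmemC hmemD
                (chained_left hy.1 hy.2 hz.2)) hne
            · rfl
          · rfl
        rw [this, zero_mul]
      · rfl
    · rfl
  have key2 : ∀ (𝒞 𝒟 : Set (IncTriple X)), IsApproxClass 𝒞 → IsApproxClass 𝒟 →
      𝒞 ≠ 𝒟 → ∀ f g h : JRad X K, starC 𝒟 f (starC 𝒞 g h) = 0 := by
    intro 𝒞 𝒟 h𝒞 h𝒟 hne f g h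
    funext r
    show (∑ z : X, _) = (0 : K)
    refine Finset.sum_eq_zero fun z _ => ?_
    split
    · next hz =>
      split
      · next hmemD =>
        have : starC 𝒞 g h ⟨(z, r.1.2), hz.2⟩ = 0 := by
          show (∑ y : X, _) = (0 : K)
          refine Finset.sum_eq_zero fun y _ => ?_
          split
          · next hy =>
            split
            · next hmemC =>
              exact absurd (class_eq_of_chained h𝒞 h𝒟 hmemC hmemD
                (chained_right hz.1 hy.1 hy.2)) hne
            · rfl
          · rfl
        rw [this, mul_zero]
      · rfl
    · rfl
  exact ⟨key 𝒞 𝒟 h𝒞 h𝒟 hne f g h, key 𝒟 𝒞 h𝒟 h𝒞 hne.symm f g h,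
    key2 𝒟 𝒞 h𝒟 h𝒞 hne.symm f g h, key2 𝒞 𝒟 h𝒞 h𝒟 hne f g h⟩
end
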